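/- arXiv:2312.13089 — 5 statements merged into one kernel-verified Lean document; each statement's English description precedes it below -/
import Mathlib

section
/- Let m, n be positive integers and j a non-negative integer such that m ≤ n and j < n. Then the number of homomorphisms f from the path P_m to the path P_n with f(0) = j is |Hom^j(P_m, P_n)| = Σ_{t = max{0, ⌈(j−(n−m))/2⌉}}^{⌈(m+j)/2⌉ − 1} C(m−1, t) − Σ_{t=0}^{⌊(j−(n−m))/2⌋ − 1} C(m−1, t) − Σ_{t=0}^{⌊(m−j−1)/2⌋ − 1} C(m−1, t), where C(a,b) denotes the binomial coefficient and an empty sum (one whose upper limit is below its lower limit) is 0. -/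
/-- The binomial coefficient `C(a, b)` with an integer lower argument, taken to be `0`
when `b < 0` (and, via `Nat.choose`, also `0` when `b > a`). -/
def chooseZ (a : ℕ) (b : ℤ) : ℕ := if 0 ≤ b then a.choose b.toNat else 0

/-- `f : Fin m → ℕ` is a homomorphism from the path `P_m` to the path `P_n`. -/
def IsPathHom (m n : ℕ) (f : Fin m → ℕ) : Prop :=
  (∀ x, f x < n) ∧
  ∀ (x : ℕ) (h : x + 1 < m),
    f ⟨x + 1, h⟩ = f ⟨x, Nat.lt_of_succ_lt h⟩ + 1 ∨
    f ⟨x, Nat.lt_of_succ_lt h⟩ = f ⟨x + 1, h⟩ + 1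

/-- `|Hom^j(P_m, P_n)|`: the number of homomorphisms `f : P_m → P_n` with `f(0) = j`. -/
noncomputable def homCount (m n j : ℕ) : ℕ :=
  Nat.card {f : Fin m → ℕ // IsPathHom m n f ∧ ∀ h : 0 < m, f ⟨0, h⟩ = j}

/-!
A homomorphism `P_m → P_n` is a `±1`-walk of length `m - 1` inside `[0, n)`. Deleting the first
vertex shows that the number `H_m(i)` of those starting at `i` satisfies
`H_{m+1}(i) = H_m(i + 1) + H_m(i - 1)` for `0 ≤ i < n`, with `H_m(-1) = H_m(n) = 0`. Written with
partial sums of binomial coefficients, the right-hand side obeys the same recursion by Pascal's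
rule, and the symmetry `∑_{t ≤ a} C(L, t) + ∑_{t ≤ L - 1 - a} C(L, t) = 2 ^ L` gives it the same
boundary values as long as `m ≤ n`.
-/

lemma chooseZ_of_neg {L : ℕ} {t : ℤ} (ht : t < 0) : chooseZ L t = 0 := by
  simp [chooseZ, not_le.mpr ht]

lemma chooseZ_succ (L : ℕ) {t : ℤ} (ht : 0 ≤ t) :
    chooseZ (L + 1) t = chooseZ L t + chooseZ L (t - 1) := by
  rcases ht.eq_or_lt with rfl | ht
  · simp [chooseZ]
  · obtain ⟨k, rfl⟩ : ∃ k : ℕ, t = k + 1 := ⟨t.toNat - 1, by omega⟩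
    simp only [chooseZ, if_pos ht.le, add_sub_cancel_right, if_pos (Int.natCast_nonneg k)]
    rw [show ((k : ℤ) + 1).toNat = k + 1 by omega, Int.toNat_natCast, Nat.choose_succ_succ',
      add_comm]

noncomputable def partialBinomSum (L : ℕ) (b : ℤ) : ℤ :=
  ∑ t ∈ Finset.Icc 0 b, (chooseZ L t : ℤ)

namespace partialBinomSum

lemma of_neg {L : ℕ} {b : ℤ} (hb : b < 0) : partialBinomSum L b = 0 := by
  simp [partialBinomSum, Finset.Icc_eq_empty_of_lt hb]

lemma zero_left {b : ℤ} (hb : 0 ≤ b) : partialBinomSum 0 b = 1 := by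
  rw [partialBinomSum, Finset.sum_eq_single_of_mem 0 (by simp [hb])]
  · simp [chooseZ]
  · intro t ht ht0
    simp only [Finset.mem_Icc] at ht
    simp [chooseZ, ht.1, Nat.choose_eq_zero_of_lt (show 0 < t.toNat by omega)]

lemma succ (L : ℕ) (b : ℤ) :
    partialBinomSum (L + 1) b = partialBinomSum L b + partialBinomSum L (b - 1) := by
  rcases lt_or_ge b 0 with hb | hb
  · simp [of_neg hb, of_neg (show b - 1 < 0 by omega)]
  have hshift : ∑ t ∈ Finset.Icc 0 b, (chooseZ L (t - 1) : ℤ) = partialBinomSum L (b - 1) := by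
    have hmap : Finset.Icc (0 : ℤ) b = (Finset.Icc (-1) (b - 1)).map (addRightEmbedding 1) := by
      rw [Finset.map_add_right_Icc]; norm_num
    rw [hmap, Finset.sum_map, ← Finset.insert_Icc_add_one_left_eq_Icc (by omega),
      Finset.sum_insert (by simp)]
    simp [chooseZ_of_neg, partialBinomSum]
  rw [← hshift, partialBinomSum, partialBinomSum, ← Finset.sum_add_distrib]
  refine Finset.sum_congr rfl fun t ht => ?_
  rw [chooseZ_succ L (Finset.mem_Icc.mp ht).1, Nat.cast_add]

lemma add_eq_two_pow (L : ℕ) {a b : ℤ} (hab : a + b = L - 1) :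
    partialBinomSum L a + partialBinomSum L b = 2 ^ L := by
  induction L generalizing a b with
  | zero =>
    rcases le_or_gt 0 a with ha | ha
    · simp [zero_left ha, of_neg (show b < 0 by omega)]
    · simp [of_neg ha, zero_left (show 0 ≤ b by omega)]
  | succ L ih =>
    have h₁ := ih (a := a) (b := b - 1) (by push_cast at hab; omega)
    have h₂ := ih (a := a - 1) (b := b) (by push_cast at hab; omega)
    rw [succ, succ, pow_succ]
    linarith

lemma of_le {L : ℕ} {b : ℤ} (hb : L ≤ b) : partialBinomSum L b = 2 ^ L := by
  simpa [of_neg (show (L : ℤ) - 1 - b < 0 by omega)] using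
    add_eq_two_pow L (a := b) (b := L - 1 - b) (by ring)

lemma sub_eq_sum_Icc (L : ℕ) {a b : ℤ} (hab : a - 1 ≤ b) :
    partialBinomSum L b - partialBinomSum L (a - 1) =
      ∑ t ∈ Finset.Icc (max 0 a) b, (chooseZ L t : ℤ) := by
  rcases le_or_gt a 0 with ha | ha
  · rw [max_eq_left ha, of_neg (b := a - 1) (by omega), sub_zero, partialBinomSum]
  · rw [max_eq_right ha.le, partialBinomSum, partialBinomSum, sub_eq_iff_eq_add,
      ← Finset.sum_union (Finset.disjoint_left.2 fun t h₁ h₂ => by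
        simp only [Finset.mem_Icc] at h₁ h₂; omega)]
    congr 1
    ext t
    simp only [Finset.mem_Icc, Finset.mem_union]
    omega

end partialBinomSum

/-- `tailCount L c` is the number of `±1`-sequences of length `L` with sum at least `-c`
(such a sequence with `t` entries `-1` has sum `L - 2t`). -/
noncomputable def tailCount (L : ℕ) (c : ℤ) : ℤ := partialBinomSum L ((L + c) / 2)

namespace tailCount

lemma succ (L : ℕ) (c : ℤ) : tailCount (L + 1) c = tailCount L (c + 1) + tailCount L (c - 1) := by
  rw [tailCount, partialBinomSum.succ, tailCount, tailCount]
  congr 2 <;> omega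

lemma of_lt {L : ℕ} {c : ℤ} (hc : c < -L) : tailCount L c = 0 :=
  partialBinomSum.of_neg (by omega)

lemma of_le {L : ℕ} {c : ℤ} (hc : L ≤ c) : tailCount L c = 2 ^ L :=
  partialBinomSum.of_le (by omega)

lemma add_neg_sub_one (L : ℕ) (c : ℤ) : tailCount L c + tailCount L (-c - 1) = 2 ^ L :=
  partialBinomSum.add_eq_two_pow L (by omega)

lemma zero_left {c : ℤ} (hc : 0 ≤ c) : tailCount 0 c = 1 :=
  partialBinomSum.zero_left (by omega)

end tailCount

/-- Reflection principle: from the `±1`-walks of length `L` from `j` ending in `[0, ∞)`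
(`tailCount L j`) remove those ending in `[n, ∞)`, those ending below `n` after touching `n`, and
those touching `-1`; reflection after the first visit maps the last two classes onto the walks
ending in `[n + 1, ∞)` and in `(-∞, -2]`. -/
noncomputable def pathHomFormula (L n : ℕ) (j : ℤ) : ℤ :=
  tailCount L j - tailCount L (j - n) - tailCount L (j - n - 1) - tailCount L (-j - 2)

namespace pathHomFormula

variable {L n : ℕ}

lemma succ (j : ℤ) :
    pathHomFormula (L + 1) n j = pathHomFormula L n (j + 1) + pathHomFormula L n (j - 1) := by
  simp only [pathHomFormula, tailCount.succ]
  ring_nf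

lemma neg_one (h : L ≤ n) : pathHomFormula L n (-1) = 0 := by
  rw [pathHomFormula, tailCount.of_lt (c := -1 - n) (by omega),
    tailCount.of_lt (c := -1 - n - 1) (by omega)]
  ring_nf

lemma self (h : L < n) : pathHomFormula L n n = 0 := by
  rw [pathHomFormula, tailCount.of_le (by omega), tailCount.of_lt (c := -n - 2) (by omega),
    sub_self, zero_sub, ← tailCount.add_neg_sub_one L 0]
  ring_nf

lemma zero_left {j : ℤ} (h0 : 0 ≤ j) (hj : j < n) : pathHomFormula 0 n j = 1 := by
  rw [pathHomFormula, tailCount.zero_left h0, tailCount.of_lt (by omega),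
    tailCount.of_lt (c := j - n - 1) (by omega), tailCount.of_lt (c := -j - 2) (by omega)]
  ring

end pathHomFormula

lemma isPathHom_cons {m n a : ℕ} {g : Fin m → ℕ} (hm : 0 < m) :
    IsPathHom (m + 1) n (Fin.cons a g) ↔
      a < n ∧ ((g ⟨0, hm⟩ : ℤ) = a + 1 ∨ (g ⟨0, hm⟩ : ℤ) = a - 1) ∧ IsPathHom m n g := by
  simp only [IsPathHom, Fin.forall_fin_succ, Fin.cons_zero, Fin.cons_succ]
  constructor
  · rintro ⟨⟨ha, hg⟩, hadj⟩
    refine ⟨ha, ?_, hg, fun x hx => hadj (x + 1) (by omega)⟩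
    have h0 : g ⟨0, hm⟩ = a + 1 ∨ a = g ⟨0, hm⟩ + 1 := hadj 0 (Nat.succ_lt_succ hm)
    omega
  · rintro ⟨ha, hadj, hg, hgadj⟩
    refine ⟨⟨ha, hg⟩, fun x hx => ?_⟩
    rcases x with _ | x
    · change g ⟨0, hm⟩ = a + 1 ∨ a = g ⟨0, hm⟩ + 1
      omega
    · exact hgadj x (by omega)

/-- `Hom^i(P_m, P_n)` for an integer `i`, so that the neighbours `i ± 1` need no truncated
subtraction. -/
abbrev PathHomFrom (m n : ℕ) (i : ℤ) :=
  {f : Fin m → ℕ // IsPathHom m n f ∧ ∀ h : 0 < m, (f ⟨0, h⟩ : ℤ) = i}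

namespace PathHomFrom

variable {m n : ℕ}

instance (i : ℤ) : Finite (PathHomFrom m n i) :=
  Finite.of_injective (fun f x => (⟨f.1 x, f.2.1.1 x⟩ : Fin n)) fun _ _ hfg =>
    Subtype.ext <| funext fun x => congrArg Fin.val (congrFun hfg x)

def tailEquiv (hm : 0 < m) {i : ℤ} (hi : 0 ≤ i) (hin : i < n) :
    PathHomFrom (m + 1) n i ≃
      {g : Fin m → ℕ // IsPathHom m n g ∧
        ((∀ h : 0 < m, (g ⟨0, h⟩ : ℤ) = i + 1) ∨ ∀ h : 0 < m, (g ⟨0, h⟩ : ℤ) = i - 1)} where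
  toFun f := ⟨Fin.tail f.1, by
    obtain ⟨-, hadj, hg⟩ := (isPathHom_cons hm).1 ((Fin.cons_self_tail f.1).symm ▸ f.2.1)
    have h0 : (f.1 0 : ℤ) = i := f.2.2 m.succ_pos
    exact ⟨hg, by rw [h0] at hadj; exact hadj.imp (fun h _ => h) (fun h _ => h)⟩⟩
  invFun g := ⟨Fin.cons i.toNat g.1, by
    refine (isPathHom_cons hm).2 ⟨by omega, ?_, g.2.1⟩
    rw [Int.toNat_of_nonneg hi]
    exact g.2.2.imp (fun h => h hm) (fun h => h hm), fun _ => by simp [hi]⟩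
  left_inv f := by
    have h0 : (f.1 0 : ℤ) = i := f.2.2 m.succ_pos
    refine Subtype.ext ?_
    conv_rhs => rw [← Fin.cons_self_tail f.1]
    change Fin.cons i.toNat (Fin.tail f.1) = _
    rw [show i.toNat = f.1 0 by omega]
  right_inv _ := rfl

lemma card_succ (hm : 0 < m) {i : ℤ} (hi : 0 ≤ i) (hin : i < n) :
    Nat.card (PathHomFrom (m + 1) n i) =
      Nat.card (PathHomFrom m n (i + 1)) + Nat.card (PathHomFrom m n (i - 1)) := by
  classical
  have hdisj :
      Disjoint (fun g : Fin m → ℕ => IsPathHom m n g ∧ ∀ h : 0 < m, (g ⟨0, h⟩ : ℤ) = i + 1)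
        (fun g => IsPathHom m n g ∧ ∀ h : 0 < m, (g ⟨0, h⟩ : ℤ) = i - 1) := by
    rw [Pi.disjoint_iff]
    intro g
    simp only [Prop.disjoint_iff]
    rintro ⟨⟨-, h₁⟩, -, h₂⟩
    have := h₁ hm
    have := h₂ hm
    omega
  rw [Nat.card_congr ((tailEquiv hm hi hin).trans
    ((Equiv.subtypeEquivRight fun _ => and_or_left).trans (subtypeOrEquiv _ _ hdisj))),
    Nat.card_sum]

lemma card_eq_zero (hm : 0 < m) {i : ℤ} (hi : i < 0 ∨ n ≤ i) :
    Nat.card (PathHomFrom m n i) = 0 := by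
  refine Nat.card_eq_zero.2 (Or.inl ⟨fun f => ?_⟩)
  have h0 := f.2.2 hm
  have hn := f.2.1.1 ⟨0, hm⟩
  omega

lemma card_one {i : ℤ} (hi : 0 ≤ i) (hin : i < n) : Nat.card (PathHomFrom 1 n i) = 1 := by
  refine Nat.card_eq_one_iff_unique.2 ⟨⟨fun f g => Subtype.ext <| funext fun x => ?_⟩,
    ⟨⟨fun _ => i.toNat, ⟨fun _ => by dsimp only; omega, fun _ hx => by omega⟩,
      fun _ => by simp [hi]⟩⟩⟩
  have hf := f.2.2 Nat.one_pos
  have hg := g.2.2 Nat.one_pos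
  rw [Subsingleton.elim x ⟨0, Nat.one_pos⟩]
  omega

end PathHomFrom

lemma card_pathHomFrom_eq_pathHomFormula {L n : ℕ} (hL : L < n) {i : ℤ} (hi : 0 ≤ i)
    (hin : i < n) : (Nat.card (PathHomFrom (L + 1) n i) : ℤ) = pathHomFormula L n i := by
  induction L generalizing i with
  | zero => rw [PathHomFrom.card_one hi hin, pathHomFormula.zero_left hi hin, Nat.cast_one]
  | succ L ih =>
    have hnbr : ∀ k : ℤ, -1 ≤ k → k ≤ n →
        (Nat.card (PathHomFrom (L + 1) n k) : ℤ) = pathHomFormula L n k := by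
      intro k hk₁ hk₂
      obtain rfl | rfl | ⟨hk0, hkn⟩ : k = -1 ∨ k = n ∨ (0 ≤ k ∧ k < n) := by omega
      · rw [PathHomFrom.card_eq_zero L.succ_pos (by omega), pathHomFormula.neg_one (by omega),
          Nat.cast_zero]
      · rw [PathHomFrom.card_eq_zero L.succ_pos (by omega), pathHomFormula.self (by omega),
          Nat.cast_zero]
      · exact ih (by omega) hk0 hkn
    rw [PathHomFrom.card_succ L.succ_pos hi hin, Nat.cast_add, hnbr _ (by omega) (by omega),
      hnbr _ (by omega) (by omega), pathHomFormula.succ]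

lemma homCount_eq_card_pathHomFrom (m n j : ℕ) : homCount m n j = Nat.card (PathHomFrom m n j) :=
  Nat.card_congr <| Equiv.subtypeEquivRight fun _ =>
    and_congr_right' <| forall_congr' fun _ => Nat.cast_inj.symm

theorem homCount_formula_reduced_general (m n j : ℕ) (hm : 0 < m)
    (hmn : m ≤ n) (hj : j < n) :
    (homCount m n j : ℤ) =
      (∑ t ∈ Finset.Icc (max 0 ⌈((j : ℚ) - ((n : ℚ) - m)) / 2⌉) (⌈((m : ℚ) + j) / 2⌉ - 1),
        (chooseZ (m - 1) t : ℤ)) -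
      (∑ t ∈ Finset.Icc 0 (⌊((j : ℚ) - ((n : ℚ) - m)) / 2⌋ - 1), (chooseZ (m - 1) t : ℤ)) -
      (∑ t ∈ Finset.Icc 0 (⌊((m : ℚ) - j - 1) / 2⌋ - 1), (chooseZ (m - 1) t : ℤ)) := by
  obtain ⟨L, rfl⟩ : ∃ L, m = L + 1 := ⟨m - 1, by omega⟩
  have hhalf : ∀ q : ℚ, ∀ k : ℤ, q = k → q / 2 = (k : ℚ) / ((2 : ℕ) : ℚ) := by
    rintro q k rfl; norm_num
  rw [hhalf _ (j - n + (L + 1)) (by push_cast; ring), hhalf _ (L + 1 + j) (by push_cast; ring),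
    hhalf _ (L - j) (by push_cast; ring), Rat.ceil_intCast_div_natCast,
    Rat.ceil_intCast_div_natCast, Rat.floor_intCast_div_natCast, Rat.floor_intCast_div_natCast,
    ← partialBinomSum.sub_eq_sum_Icc _ (by omega), homCount_eq_card_pathHomFrom,
    card_pathHomFrom_eq_pathHomFormula (by omega) (by omega) (by exact_mod_cast hj)]
  simp only [pathHomFormula, tailCount, partialBinomSum, Nat.add_sub_cancel, Nat.cast_ofNat]
  congr 5 <;> omega

/-- for `m ≤ n` and `j < n`,
`|Hom^j(P_m, P_n)| = Σ_{t=max{0,⌈(j−(n−m))/2⌉}}^{⌈(m+j)/2⌉−1} C(m−1, t)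
  − Σ_{t=0}^{⌊(j−(n−m))/2⌋−1} C(m−1, t) − Σ_{t=0}^{⌊(m−j−1)/2⌋−1} C(m−1, t)`. -/
theorem homCount_formula_reduced (m n j : ℕ) (hm : 0 < m) (hn : 0 < n)
    (hmn : m ≤ n) (hj : j < n) :
    (homCount m n j : ℤ) =
      (∑ t ∈ Finset.Icc (max 0 ⌈((j : ℚ) - ((n : ℚ) - m)) / 2⌉) (⌈((m : ℚ) + j) / 2⌉ - 1),
        (chooseZ (m - 1) t : ℤ)) -
      (∑ t ∈ Finset.Icc 0 (⌊((j : ℚ) - ((n : ℚ) - m)) / 2⌋ - 1), (chooseZ (m - 1) t : ℤ)) -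
      (∑ t ∈ Finset.Icc 0 (⌊((m : ℚ) - j - 1) / 2⌋ - 1), (chooseZ (m - 1) t : ℤ)) :=
  homCount_formula_reduced_general m n j hm hmn hj
end

section
/- Let m > 2 and n, k be positive integers. Then |WHom(P_m, P_{2n} □ P_{2k})| = 4 · Σ_{i=0}^{n−1} Σ_{j=0}^{k−1} |WHom^{ij}(P_m, P_{2n} □ P_{2k})|. -/
/-- Adjacency of vertices in a path graph on `{0, 1, 2, …}`: `a` and `b` differ by 1. -/
def natAdj (a b : ℕ) : Prop := a = b + 1 ∨ b = a + 1

/-- `f : Fin m → ℕ × ℕ` is a weak homomorphism from the path `P_m` to the rectangular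
grid graph `P_n □ P_k` (the Cartesian product of the paths `P_n` and `P_k`):
every vertex lands in `{0,…,n−1} × {0,…,k−1}`, and consecutive vertices are mapped to
equal or adjacent vertices of the grid. -/
def IsGridWHom (m n k : ℕ) (f : Fin m → ℕ × ℕ) : Prop :=
  (∀ x, (f x).1 < n ∧ (f x).2 < k) ∧
  ∀ (x : ℕ) (h : x + 1 < m),
    f ⟨x + 1, h⟩ = f ⟨x, Nat.lt_of_succ_lt h⟩ ∨
    (natAdj (f ⟨x + 1, h⟩).1 (f ⟨x, Nat.lt_of_succ_lt h⟩).1 ∧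
      (f ⟨x + 1, h⟩).2 = (f ⟨x, Nat.lt_of_succ_lt h⟩).2) ∨
    ((f ⟨x + 1, h⟩).1 = (f ⟨x, Nat.lt_of_succ_lt h⟩).1 ∧
      natAdj (f ⟨x + 1, h⟩).2 (f ⟨x, Nat.lt_of_succ_lt h⟩).2)

/-- `|WHom^{ij}(P_m, P_n □ P_k)|`: the number of weak homomorphisms from `P_m` to
`P_n □ P_k` sending `0` to `(i, j)`. -/
noncomputable def gridWHomCountAt (m n k i j : ℕ) : ℕ :=
  Nat.card {f : Fin m → ℕ × ℕ // IsGridWHom m n k f ∧ ∀ h : 0 < m, f ⟨0, h⟩ = (i, j)}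

/-- `|WHom(P_m, P_n □ P_k)|`: the number of weak homomorphisms from `P_m` to `P_n □ P_k`. -/
noncomputable def gridWHomCount (m n k : ℕ) : ℕ :=
  Nat.card {f : Fin m → ℕ × ℕ // IsGridWHom m n k f}

/-!
Reflecting the grid `P_{2n} □ P_{2k}` in either axis is a graph automorphism, and composing with it
is a bijection between the weak homomorphisms starting at `(i, j)` and those starting at the
reflected vertex. The two reflections and their composite carry the quadrant `[0, n) × [0, k)` onto
the other three quadrants, so sorting the weak homomorphisms by their starting vertex yields four
equal sums.
-/

open Finset

lemma IsGridWHom.finite (m N K : ℕ) : Finite {f : Fin m → ℕ × ℕ // IsGridWHom m N K f} := by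
  have hbox : (Set.univ.pi fun _ : Fin m => Set.Iio N ×ˢ Set.Iio K).Finite :=
    Set.Finite.pi fun _ => (Set.finite_Iio N).prod (Set.finite_Iio K)
  exact hbox.subset fun f hf x _ => hf.1 x

lemma gridWHomCount_eq_sum (m N K : ℕ) (hm : 0 < m) :
    gridWHomCount m N K = ∑ i ∈ range N, ∑ j ∈ range K, gridWHomCountAt m N K i j := by
  let fiber := fun (p : ↥(range N ×ˢ range K)) =>
    {f : Fin m → ℕ × ℕ // IsGridWHom m N K f ∧ ∀ h : 0 < m, f ⟨0, h⟩ = p.1}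
  have e : {f : Fin m → ℕ × ℕ // IsGridWHom m N K f} ≃ Σ p, fiber p :=
    { toFun := fun f => ⟨⟨f.1 ⟨0, hm⟩, by simpa using f.2.1 ⟨0, hm⟩⟩, f.1, f.2, fun _ => rfl⟩
      invFun := fun s => ⟨s.2.1, s.2.2.1⟩
      left_inv := fun _ => rfl
      right_inv := by
        rintro ⟨⟨p, hp⟩, f, hf, hf0⟩
        obtain rfl : f ⟨0, hm⟩ = p := hf0 hm
        rfl }
  have := IsGridWHom.finite m N K
  have : ∀ p, Finite (fiber p) := fun p =>
    Finite.of_injective (fun g : fiber p => (⟨g.1, g.2.1⟩ : {f // IsGridWHom m N K f}))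
      fun _ _ h => Subtype.ext (congrArg Subtype.val h :)
  rw [gridWHomCount, Nat.card_congr e, Nat.card_sigma, ← sum_product']
  exact sum_coe_sort (range N ×ˢ range K) fun p => gridWHomCountAt m N K p.1 p.2

/-- `φ` restricts to an involutive automorphism of `P_N` on `{0, …, N - 1}`; its values elsewhere
are irrelevant. -/
structure IsPathInvolution (N : ℕ) (φ : ℕ → ℕ) : Prop where
  lt : ∀ a < N, φ a < N
  involutive : ∀ a < N, φ (φ a) = a
  adj : ∀ a < N, ∀ b < N, natAdj a b → natAdj (φ a) (φ b)

lemma IsPathInvolution.id (N : ℕ) : IsPathInvolution N id :=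
  ⟨fun _ ha => ha, fun _ _ => rfl, fun _ _ _ _ hab => hab⟩

lemma isPathInvolution_reflect (N : ℕ) : IsPathInvolution N (N - 1 - ·) where
  lt _ _ := by omega
  involutive _ _ := by omega
  adj _ _ _ _ hab := by unfold natAdj at hab ⊢; omega

section prodMap

variable {m N K : ℕ} {φ ψ : ℕ → ℕ} {f : Fin m → ℕ × ℕ}

lemma IsGridWHom.prodMap_comp (hφ : IsPathInvolution N φ) (hψ : IsPathInvolution K ψ)
    (hf : IsGridWHom m N K f) : IsGridWHom m N K (Prod.map φ ψ ∘ f) := by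
  obtain ⟨hbox, hstep⟩ := hf
  refine ⟨fun x => ⟨hφ.lt _ (hbox x).1, hψ.lt _ (hbox x).2⟩, fun x h => ?_⟩
  have h₁ := hbox ⟨x + 1, h⟩
  have h₀ := hbox ⟨x, Nat.lt_of_succ_lt h⟩
  simp only [Function.comp_apply, Prod.map_fst, Prod.map_snd]
  rcases hstep x h with heq | ⟨hadj, heq⟩ | ⟨heq, hadj⟩
  · exact Or.inl (by rw [heq])
  · exact Or.inr (Or.inl ⟨hφ.adj _ h₁.1 _ h₀.1 hadj, by rw [heq]⟩)
  · exact Or.inr (Or.inr ⟨by rw [heq], hψ.adj _ h₁.2 _ h₀.2 hadj⟩)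

lemma IsGridWHom.prodMap_prodMap_comp (hφ : IsPathInvolution N φ)
    (hψ : IsPathInvolution K ψ) (hf : IsGridWHom m N K f) :
    Prod.map φ ψ ∘ (Prod.map φ ψ ∘ f) = f :=
  funext fun x => Prod.ext (hφ.involutive _ (hf.1 x).1) (hψ.involutive _ (hf.1 x).2)

lemma gridWHomCountAt_prodMap (hφ : IsPathInvolution N φ) (hψ : IsPathInvolution K ψ)
    {i j : ℕ} (hi : i < N) (hj : j < K) :
    gridWHomCountAt m N K (φ i) (ψ j) = gridWHomCountAt m N K i j := by
  refine Nat.card_congr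
    { toFun := fun f => ⟨Prod.map φ ψ ∘ f.1, f.2.1.prodMap_comp hφ hψ, fun h => ?_⟩
      invFun := fun f => ⟨Prod.map φ ψ ∘ f.1, f.2.1.prodMap_comp hφ hψ, fun h => ?_⟩
      left_inv := fun f => Subtype.ext (f.2.1.prodMap_prodMap_comp hφ hψ)
      right_inv := fun f => Subtype.ext (f.2.1.prodMap_prodMap_comp hφ hψ) }
  · simp [f.2.2 h, hφ.involutive i hi, hψ.involutive j hj]
  · simp [f.2.2 h]

end prodMap

lemma sum_range_two_mul_of_reflect {M : Type*} [AddCommMonoid M] (N : ℕ) (g : ℕ → M)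
    (hg : ∀ i < N, g (2 * N - 1 - i) = g i) :
    ∑ i ∈ range (2 * N), g i = 2 • ∑ i ∈ range N, g i := by
  rw [two_mul, sum_range_add, two_nsmul, ← sum_range_reflect]
  congr 1
  refine sum_congr rfl fun i hi => ?_
  have hi := mem_range.1 hi
  rw [← hg (N - 1 - i) (by omega)]
  congr 1
  omega

theorem gridWHomCount_even_even_general (m n k : ℕ) (hm : 2 < m) :
    gridWHomCount m (2 * n) (2 * k) =
      4 * ∑ i ∈ Finset.range n, ∑ j ∈ Finset.range k,
        gridWHomCountAt m (2 * n) (2 * k) i j := by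
  have reflect_row (i j : ℕ) (hi : i < 2 * n) (hj : j < 2 * k) :
      gridWHomCountAt m (2 * n) (2 * k) (2 * n - 1 - i) j =
        gridWHomCountAt m (2 * n) (2 * k) i j :=
    gridWHomCountAt_prodMap (isPathInvolution_reflect _) (IsPathInvolution.id _) hi hj
  have reflect_col (i j : ℕ) (hi : i < 2 * n) (hj : j < 2 * k) :
      gridWHomCountAt m (2 * n) (2 * k) i (2 * k - 1 - j) =
        gridWHomCountAt m (2 * n) (2 * k) i j :=
    gridWHomCountAt_prodMap (IsPathInvolution.id _) (isPathInvolution_reflect _) hi hj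
  rw [gridWHomCount_eq_sum _ _ _ (by omega),
    sum_congr rfl fun i hi => sum_range_two_mul_of_reflect k _ fun j hj =>
      reflect_col i j (mem_range.1 hi) (by omega),
    sum_range_two_mul_of_reflect n _ fun i hi => congrArg (2 • ·) <| sum_congr rfl fun j hj =>
      reflect_row i j (by omega) (by rw [mem_range] at hj; omega),
    ← smul_sum, smul_smul, smul_eq_mul]
  rfl

/-- `|WHom(P_m, P_{2n} □ P_{2k})|
  = 4 Σ_{i=0}^{n−1} Σ_{j=0}^{k−1} |WHom^{ij}(P_m, P_{2n} □ P_{2k})|`. -/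
theorem gridWHomCount_even_even (m n k : ℕ) (hm : 2 < m) (hn : 0 < n) (hk : 0 < k) :
    gridWHomCount m (2 * n) (2 * k) =
      4 * ∑ i ∈ Finset.range n, ∑ j ∈ Finset.range k,
        gridWHomCountAt m (2 * n) (2 * k) i j :=
  gridWHomCount_even_even_general m n k hm
end

section
/- Let m, n, k be positive integers and let i, j be non-negative integers with i < n/2 − 1 and j < k/2 − 1. Then the number of weak homomorphisms f from P_m to the rectangular grid graph P_n □ P_k with f(0) = (i, j) satisfies |WHom^{ij}(P_m, P_n □ P_k)| = Σ_{h=0}^{m−1} C(m−1, h) · |Hom^i(P_{h+1}, P_n)| · |WHom^j(P_{m−h}, P_k)|, where C(m−1, h) is a binomial coefficient. -/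
/-- `f : Fin m → ℕ` is a weak homomorphism from the path `P_m` to the path `P_n`. -/
def IsPathWHom (m n : ℕ) (f : Fin m → ℕ) : Prop :=
  (∀ x, f x < n) ∧
  ∀ (x : ℕ) (h : x + 1 < m),
    f ⟨x + 1, h⟩ = f ⟨x, Nat.lt_of_succ_lt h⟩ ∨
    f ⟨x + 1, h⟩ = f ⟨x, Nat.lt_of_succ_lt h⟩ + 1 ∨
    f ⟨x, Nat.lt_of_succ_lt h⟩ = f ⟨x + 1, h⟩ + 1

/-- `|WHom^j(P_m, P_n)|`: the number of weak homomorphisms `f : P_m → P_n` with `f(0) = j`. -/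
noncomputable def whomCount (m n j : ℕ) : ℕ :=
  Nat.card {f : Fin m → ℕ // IsPathWHom m n f ∧ ∀ h : 0 < m, f ⟨0, h⟩ = j}

/-!
A weak homomorphism `P_m → P_n □ P_k` from `(i, j)` is a walk of `m - 1` steps, each of which
either moves the first coordinate to a neighbour in `P_n`, or keeps it and moves the second
coordinate weakly (to itself or to a neighbour) in `P_k`. Classifying walks by their first step,
the number `G_M(i, j)` of `M`-step walks satisfies
`G_{M+1}(i, j) = ∑_{i' ∼ i} G_M(i', j) + ∑_{j' = j ∨ j' ∼ j} G_M(i, j')`,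
and the one-coordinate counts satisfy the analogous recurrences. With Pascal's rule, induction
on `M` turns this into the binomial convolution: it is the Leibniz rule for the two commuting
one-coordinate transfer operators.
-/

open Finset

section Walk

variable {α : Type*} (P : α → Prop) (R : α → α → Prop)

def IsWalk (m : ℕ) (f : Fin m → α) : Prop :=
  (∀ x, P (f x)) ∧ ∀ (x : ℕ) (h : x + 1 < m), R (f ⟨x + 1, h⟩) (f ⟨x, Nat.lt_of_succ_lt h⟩)

abbrev WalkFrom (m : ℕ) (a : α) : Type _ :=
  {f : Fin m → α // IsWalk P R m f ∧ ∀ h : 0 < m, f ⟨0, h⟩ = a}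

noncomputable def walkCount (m : ℕ) (a : α) : ℕ :=
  Nat.card (WalkFrom P R m a)

variable {P R}

instance [Finite {a // P a}] (m : ℕ) (a : α) : Finite (WalkFrom P R m a) :=
  Finite.of_injective (fun f x => (⟨f.1 x, f.2.1.1 x⟩ : {a // P a}))
    fun _ _ h => Subtype.ext <| funext fun x => congrArg Subtype.val (congrFun h x)

theorem walkCount_one {a : α} (ha : P a) : walkCount P R 1 a = 1 := by
  refine Nat.card_eq_one_iff_exists.2
    ⟨⟨fun _ => a, ⟨fun _ => ha, fun _ h => by omega⟩, fun _ => rfl⟩, ?_⟩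
  rintro ⟨f, -, hf⟩
  ext x
  rw [Fin.fin_one_eq_zero x]
  exact hf zero_lt_one

theorem walkCount_succ_of_not {a : α} (ha : ¬P a) (m : ℕ) : walkCount P R (m + 1) a = 0 := by
  have : IsEmpty (WalkFrom P R (m + 1) a) := ⟨fun ⟨f, hf, hf0⟩ => ha (hf0 m.succ_pos ▸ hf.1 0)⟩
  exact Nat.card_of_isEmpty

def walkFromConsEquiv (S : Finset α) (hS : ∀ b, P b → b ∈ S) [DecidableRel R] {a : α}
    (ha : P a) (m : ℕ) :
    WalkFrom P R (m + 2) a ≃ Σ b : {b // b ∈ S.filter (R · a)}, WalkFrom P R (m + 1) b where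
  toFun f := ⟨⟨f.1 ⟨1, by omega⟩, mem_filter.2 ⟨hS _ (f.2.1.1 _), by
      simpa only [f.2.2 (by omega)] using f.2.1.2 0 (by omega)⟩⟩,
    ⟨Fin.tail f.1, ⟨fun _ => f.2.1.1 _, fun x _ => f.2.1.2 (x + 1) (by omega)⟩, fun _ => rfl⟩⟩
  invFun g := ⟨Fin.cons a g.2.1, ⟨fun x => Fin.cases ha (fun y => g.2.2.1.1 y) x, fun x h => by
      rcases x with _ | x
      · have h2 := (mem_filter.1 g.1.2).2
        rw [← g.2.2.2 (by omega)] at h2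
        exact h2
      · exact g.2.2.1.2 x (by omega)⟩, fun _ => rfl⟩
  left_inv := fun ⟨f, _, hf0⟩ => Subtype.ext <|
    (congrArg (Fin.cons · (Fin.tail f)) (hf0 (by omega)).symm).trans (Fin.cons_self_tail f)
  right_inv := fun ⟨⟨_, _⟩, ⟨_, _, hw0⟩⟩ => by
    obtain rfl := hw0 (by omega)
    rfl

theorem walkCount_add_two (S : Finset α) (hS : ∀ b, P b → b ∈ S) [DecidableRel R] {a : α}
    (ha : P a) (m : ℕ) :
    walkCount P R (m + 2) a = ∑ b ∈ S with R b a, walkCount P R (m + 1) b := by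
  have : Finite {a // P a} := Finite.of_injective (fun x => (⟨x.1, hS _ x.2⟩ : S))
    fun _ _ h => Subtype.ext (congrArg Subtype.val h :)
  rw [walkCount, Nat.card_congr (walkFromConsEquiv S hS ha m), Nat.card_sigma]
  exact sum_coe_sort _ (walkCount P R (m + 1))

end Walk

section Box

variable {α β : Type*} {P₁ : α → Prop} {P₂ : β → Prop} {R₁ : α → α → Prop} {R₂ : β → β → Prop}

def boxStep (R₁ : α → α → Prop) (R₂ : β → β → Prop) (q p : α × β) : Prop :=
  (R₁ q.1 p.1 ∧ q.2 = p.2) ∨ (q.1 = p.1 ∧ R₂ q.2 p.2)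

open scoped Classical in
theorem sum_filter_boxStep {M : Type*} [AddCommMonoid M] (hR₁ : ∀ a, ¬R₁ a a)
    (S₁ : Finset α) (S₂ : Finset β) {a : α} {b : β} (ha : a ∈ S₁) (hb : b ∈ S₂)
    (F : α × β → M) :
    ∑ q ∈ S₁ ×ˢ S₂ with boxStep R₁ R₂ q (a, b), F q =
      ∑ a' ∈ S₁ with R₁ a' a, F (a', b) + ∑ b' ∈ S₂ with R₂ b' b, F (a, b') := by
  have hsplit : {q ∈ S₁ ×ˢ S₂ | boxStep R₁ R₂ q (a, b)} =
      {a' ∈ S₁ | R₁ a' a}.image (·, b) ∪ {b' ∈ S₂ | R₂ b' b}.image (a, ·) := by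
    ext ⟨x, y⟩
    simp only [mem_filter, mem_product, mem_union, mem_image, Prod.mk.injEq]
    unfold boxStep
    aesop
  have hdisj : Disjoint ({a' ∈ S₁ | R₁ a' a}.image (·, b)) ({b' ∈ S₂ | R₂ b' b}.image (a, ·)) := by
    simp only [disjoint_left, mem_image, mem_filter]
    rintro _ ⟨x, ⟨-, hx⟩, rfl⟩ ⟨y, -, hxy⟩
    cases congrArg Prod.fst hxy
    exact hR₁ _ hx
  rw [hsplit, sum_union hdisj, sum_image, sum_image]
  · exact fun _ _ _ _ h => congrArg Prod.snd h
  · exact fun _ _ _ _ h => congrArg Prod.fst h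

theorem walkCount_boxStep_of_not {a : α} {b : β} (hab : ¬(P₁ a ∧ P₂ b)) (M : ℕ) :
    walkCount (fun p : α × β => P₁ p.1 ∧ P₂ p.2) (boxStep R₁ R₂) (M + 1) (a, b) =
      ∑ ij ∈ antidiagonal M,
        M.choose ij.1 * (walkCount P₁ R₁ (ij.1 + 1) a * walkCount P₂ R₂ (ij.2 + 1) b) := by
  rw [walkCount_succ_of_not (a := (a, b)) hab, eq_comm]
  refine sum_eq_zero fun ij _ => ?_
  by_cases ha : P₁ a
  · rw [walkCount_succ_of_not (hab ⟨ha, ·⟩), mul_zero, mul_zero]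
  · rw [walkCount_succ_of_not ha, zero_mul, mul_zero]

theorem walkCount_boxStep (hR₁ : ∀ a, ¬R₁ a a) (h₁ : {a | P₁ a}.Finite)
    (h₂ : {b | P₂ b}.Finite) (M : ℕ) (a : α) (b : β) :
    walkCount (fun p : α × β => P₁ p.1 ∧ P₂ p.2) (boxStep R₁ R₂) (M + 1) (a, b) =
      ∑ ij ∈ antidiagonal M,
        M.choose ij.1 * (walkCount P₁ R₁ (ij.1 + 1) a * walkCount P₂ R₂ (ij.2 + 1) b) := by
  classical
  induction M generalizing a b with
  | zero =>
    by_cases hab : P₁ a ∧ P₂ b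
    · simp [walkCount_one (P := fun p : α × β => P₁ p.1 ∧ P₂ p.2) (a := (a, b)) hab,
        walkCount_one hab.1, walkCount_one hab.2]
    · exact walkCount_boxStep_of_not hab 0
  | succ M ih =>
    by_cases hab : P₁ a ∧ P₂ b
    swap
    · exact walkCount_boxStep_of_not hab (M + 1)
    obtain ⟨ha, hb⟩ := hab
    set S₁ := h₁.toFinset
    set S₂ := h₂.toFinset
    have hS₁ : ∀ a, P₁ a → a ∈ S₁ := fun _ => h₁.mem_toFinset.2
    have hS₂ : ∀ b, P₂ b → b ∈ S₂ := fun _ => h₂.mem_toFinset.2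
    have pascal := sum_antidiagonal_choose_succ_mul (R := ℕ)
      (fun i j => walkCount P₁ R₁ (i + 1) a * walkCount P₂ R₂ (j + 1) b) M
    simp only [Nat.cast_id] at pascal
    calc _ = ∑ a' ∈ S₁ with R₁ a' a, walkCount _ (boxStep R₁ R₂) (M + 1) (a', b) +
            ∑ b' ∈ S₂ with R₂ b' b, walkCount _ (boxStep R₁ R₂) (M + 1) (a, b') := by
          rw [walkCount_add_two (S₁ ×ˢ S₂) (fun p hp => mem_product.2 ⟨hS₁ _ hp.1, hS₂ _ hp.2⟩)
            ⟨ha, hb⟩, sum_filter_boxStep hR₁ S₁ S₂ (hS₁ a ha) (hS₂ b hb)]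
      _ = ∑ ij ∈ antidiagonal M,
              M.choose ij.1 * (walkCount P₁ R₁ (ij.1 + 2) a * walkCount P₂ R₂ (ij.2 + 1) b) +
            ∑ ij ∈ antidiagonal M,
              M.choose ij.1 * (walkCount P₁ R₁ (ij.1 + 1) a * walkCount P₂ R₂ (ij.2 + 2) b) := by
          simp only [ih]
          rw [sum_comm, sum_comm (s := {b' ∈ S₂ | R₂ b' b})]
          congr 1 <;> refine sum_congr rfl fun ij _ => ?_
          · rw [walkCount_add_two S₁ hS₁ ha, sum_mul, mul_sum]
          · rw [walkCount_add_two S₂ hS₂ hb, mul_sum, mul_sum]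
      _ = _ := by
          rw [pascal, add_comm]
          congr 1
          refine sum_congr rfl fun ij hij => ?_
          rw [Nat.choose_symm_of_eq_add (mem_antidiagonal.1 hij).symm]

end Box

theorem natAdj_irrefl (a : ℕ) : ¬natAdj a a := by
  unfold natAdj
  omega

theorem homCount_eq_walkCount (m n i : ℕ) : homCount m n i = walkCount (· < n) natAdj m i := rfl

theorem whomCount_eq_walkCount (m k j : ℕ) :
    whomCount m k j = walkCount (· < k) (fun b a => b = a ∨ natAdj b a) m j := rfl

theorem gridWHomCountAt_eq_walkCount (m n k i j : ℕ) :
    gridWHomCountAt m n k i j =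
      walkCount (fun p : ℕ × ℕ => p.1 < n ∧ p.2 < k)
        (boxStep natAdj (fun b a => b = a ∨ natAdj b a)) m (i, j) := by
  have hstep : boxStep natAdj (fun b a => b = a ∨ natAdj b a) =
      fun q p => q = p ∨ (natAdj q.1 p.1 ∧ q.2 = p.2) ∨ (q.1 = p.1 ∧ natAdj q.2 p.2) := by
    ext q p
    simp only [boxStep, Prod.ext_iff]
    have := natAdj_irrefl q.1
    tauto
  rw [hstep]
  rfl

theorem gridWHomCountAt_formula_general (m n k i j : ℕ) (hm : 0 < m) :
    gridWHomCountAt m n k i j =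
      ∑ h ∈ Finset.range m,
        Nat.choose (m - 1) h * homCount (h + 1) n i * whomCount (m - h) k j := by
  obtain ⟨M, rfl⟩ : ∃ M, m = M + 1 := ⟨m - 1, by omega⟩
  rw [gridWHomCountAt_eq_walkCount,
    walkCount_boxStep natAdj_irrefl (Set.finite_lt_nat n) (Set.finite_lt_nat k)]
  simp only [← homCount_eq_walkCount, ← whomCount_eq_walkCount]
  rw [Nat.sum_antidiagonal_eq_sum_range_succ
    (fun h l => M.choose h * (homCount (h + 1) n i * whomCount (l + 1) k j))]
  refine sum_congr rfl fun h hh => ?_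
  rw [Nat.add_sub_cancel, mul_assoc, ← Nat.sub_add_comm (mem_range_succ_iff.1 hh)]

/-- for `i < n/2 − 1` and `j < k/2 − 1`,
`|WHom^{ij}(P_m, P_n □ P_k)|
  = Σ_{h=0}^{m−1} C(m−1, h) |Hom^i(P_{h+1}, P_n)| |WHom^j(P_{m−h}, P_k)|`. -/
theorem gridWHomCountAt_formula (m n k i j : ℕ) (hm : 0 < m) (hn : 0 < n) (hk : 0 < k)
    (hi : (i : ℚ) < (n : ℚ) / 2 - 1) (hj : (j : ℚ) < (k : ℚ) / 2 - 1) :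
    gridWHomCountAt m n k i j =
      ∑ h ∈ Finset.range m,
        Nat.choose (m - 1) h * homCount (h + 1) n i * whomCount (m - h) k j :=
  gridWHomCountAt_formula_general m n k i j hm
end

section
/- Let m, n, k be positive integers with m > 2. The total number of weak homomorphisms from P_m to the rectangular grid graph P_n □ P_k is |WHom(P_m, P_n □ P_k)| = 4 · Σ_{i=0}^{⌊n/2⌋−1} Σ_{j=0}^{⌊k/2⌋−1} |WHom^{ij}(P_m, P_n □ P_k)| + (1 − (−1)^n) · Σ_{j=0}^{⌊k/2⌋−1} |WHom^{⌊n/2⌋ j}(P_m, P_n □ P_k)| + (1 − (−1)^k) · Σ_{i=0}^{⌊n/2⌋−1} |WHom^{i ⌊k/2⌋}(P_m, P_n □ P_k)| + (1/4)(1 − (−1)^n)(1 − (−1)^k) · |WHom^{⌊n/2⌋ ⌊k/2⌋}(P_m, P_n □ P_k)|. -/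
open Finset

theorem Nat.card_subtype_eq_sum_card_fiber {α β : Type*} {P : α → Prop} [Finite {a // P a}]
    (π : α → β) (s : Finset β) (hs : ∀ a, P a → π a ∈ s) :
    Nat.card {a // P a} = ∑ b ∈ s, Nat.card {a // P a ∧ π a = b} := by
  let e : {a // P a} ≃ Σ b : s, {a // P a ∧ π a = b} :=
    { toFun := fun a => ⟨⟨π a, hs a a.2⟩, a, a.2, rfl⟩
      invFun := fun x => ⟨x.2, x.2.2.1⟩
      left_inv := fun _ => rfl
      right_inv := fun x => Sigma.subtype_ext (Subtype.ext x.2.2.2) rfl }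
  have (b : s) : Finite {a // P a ∧ π a = b} :=
    Finite.of_injective (fun a => (⟨a.1, a.2.1⟩ : {a // P a})) fun _ _ h =>
      Subtype.ext (congrArg Subtype.val h :)
  rw [Nat.card_congr e, Nat.card_sigma, sum_coe_sort s fun b => Nat.card {a // P a ∧ π a = b}]

theorem sum_range_eq_of_reflect {M : Type*} [AddCommMonoid M] {n : ℕ} {g : ℕ → M}
    (hg : ∀ i < n, g (n - 1 - i) = g i) :
    ∑ i ∈ range n, g i = 2 • ∑ i ∈ range (n / 2), g i + (n % 2) • g (n / 2) := by
  set q := n / 2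
  have upper : ∑ i ∈ range q, g (q + (n % 2 + i)) = ∑ i ∈ range q, g i := by
    rw [← sum_range_reflect g q]
    refine sum_congr rfl fun i hi => ?_
    rw [mem_range] at hi
    rw [← hg _ (by omega)]
    congr 1
    omega
  have middle : ∑ i ∈ range (n % 2), g (q + i) = (n % 2) • g q := by
    rcases Nat.mod_two_eq_zero_or_one n with h | h <;> simp [h]
  conv_lhs => rw [show n = q + (n % 2 + q) by omega]
  rw [sum_range_add, sum_range_add, upper, middle, two_nsmul]
  abel

theorem sum_range_sum_range_eq_of_reflect {M : Type*} [AddCommMonoid M] {n k : ℕ}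
    {g : ℕ → ℕ → M} (h₁ : ∀ i < n, ∀ j < k, g (n - 1 - i) j = g i j)
    (h₂ : ∀ i < n, ∀ j < k, g i (k - 1 - j) = g i j) :
    ∑ i ∈ range n, ∑ j ∈ range k, g i j =
      4 • ∑ i ∈ range (n / 2), ∑ j ∈ range (k / 2), g i j +
      (2 * (n % 2)) • ∑ j ∈ range (k / 2), g (n / 2) j +
      (2 * (k % 2)) • ∑ i ∈ range (n / 2), g i (k / 2) +
      (n % 2 * (k % 2)) • g (n / 2) (k / 2) := by
  rcases k.eq_zero_or_pos with rfl | hk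
  · simp
  have hk₂ : k / 2 < k := Nat.div_lt_self hk one_lt_two
  have inner : ∀ i ∈ range n, ∑ j ∈ range k, g i j =
      2 • ∑ j ∈ range (k / 2), g i j + (k % 2) • g i (k / 2) := fun i hi =>
    sum_range_eq_of_reflect (h₂ i (mem_range.1 hi))
  have outer_half : ∑ i ∈ range n, ∑ j ∈ range (k / 2), g i j =
      2 • ∑ i ∈ range (n / 2), ∑ j ∈ range (k / 2), g i j +
        (n % 2) • ∑ j ∈ range (k / 2), g (n / 2) j :=
    sum_range_eq_of_reflect fun i hi =>
      sum_congr rfl fun j hj => h₁ i hi j (by rw [mem_range] at hj; omega)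
  have outer_middle : ∑ i ∈ range n, g i (k / 2) =
      2 • ∑ i ∈ range (n / 2), g i (k / 2) + (n % 2) • g (n / 2) (k / 2) :=
    sum_range_eq_of_reflect fun i hi => h₁ i hi _ hk₂
  rw [sum_congr rfl inner, sum_add_distrib, ← smul_sum, ← smul_sum, outer_half, outer_middle]
  simp only [smul_add, smul_smul, mul_comm (k % 2), add_assoc]
  norm_num

theorem one_sub_neg_one_pow {R : Type*} [Ring R] (n : ℕ) :
    1 - (-1 : R) ^ n = 2 * ((n % 2 : ℕ) : R) := by
  rw [neg_one_pow_eq_pow_mod_two]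
  rcases Nat.mod_two_eq_zero_or_one n with h | h <;> simp [h]
  norm_num

instance (m n k : ℕ) : Finite {f : Fin m → ℕ × ℕ // IsGridWHom m n k f} :=
  Set.Finite.to_subtype <|
    (Set.Finite.pi (t := fun _ => ((range n ×ˢ range k : Finset (ℕ × ℕ)) : Set (ℕ × ℕ)))
      fun _ => finite_toSet _).subset fun f hf x _ => by simpa using hf.1 x

theorem gridWHomCount_eq_sum_gridWHomCountAt {m : ℕ} (hm : 0 < m) (n k : ℕ) :
    gridWHomCount m n k = ∑ i ∈ range n, ∑ j ∈ range k, gridWHomCountAt m n k i j := by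
  rw [gridWHomCount, Nat.card_subtype_eq_sum_card_fiber (fun f => f ⟨0, hm⟩) (range n ×ˢ range k)
    fun f hf => by simpa using hf.1 ⟨0, hm⟩, sum_product]
  refine sum_congr rfl fun i _ => sum_congr rfl fun j _ => Nat.card_congr <|
    Equiv.subtypeEquivRight fun f => and_congr_right fun _ => ⟨fun h _ => h, fun h => h hm⟩

structure IsPathInvolution_s11 (n : ℕ) (g : ℕ → ℕ) : Prop where
  lt : ∀ a < n, g a < n
  apply_apply : ∀ a < n, g (g a) = a
  map_natAdj : ∀ a < n, ∀ b < n, natAdj a b → natAdj (g a) (g b)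

theorem isPathInvolution_id (n : ℕ) : IsPathInvolution_s11 n id :=
  ⟨fun _ h => h, fun _ _ => rfl, fun _ _ _ _ h => h⟩

theorem isPathInvolution_reflect_s11 (n : ℕ) : IsPathInvolution_s11 n (fun a => n - 1 - a) :=
  ⟨fun _ _ => by omega, fun _ _ => by omega, fun _ _ _ _ h => by unfold natAdj at h ⊢; omega⟩

theorem IsGridWHom.prodMap {m n k : ℕ} {g h : ℕ → ℕ} {f : Fin m → ℕ × ℕ}
    (hg : IsPathInvolution_s11 n g) (hh : IsPathInvolution_s11 k h) (hf : IsGridWHom m n k f) :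
    IsGridWHom m n k (Prod.map g h ∘ f) := by
  obtain ⟨hbound, hstep⟩ := hf
  refine ⟨fun x => ⟨hg.lt _ (hbound x).1, hh.lt _ (hbound x).2⟩, fun x hx => ?_⟩
  have h₁ := hbound ⟨x + 1, hx⟩
  have h₀ := hbound ⟨x, Nat.lt_of_succ_lt hx⟩
  rcases hstep x hx with heq | ⟨hadj, heq⟩ | ⟨heq, hadj⟩
  · exact Or.inl (by simp [heq])
  · exact Or.inr (Or.inl ⟨hg.map_natAdj _ h₁.1 _ h₀.1 hadj, by simp [heq]⟩)
  · exact Or.inr (Or.inr ⟨by simp [heq], hh.map_natAdj _ h₁.2 _ h₀.2 hadj⟩)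

theorem gridWHomCountAt_prodMap_s11 {m n k i j : ℕ} {g h : ℕ → ℕ}
    (hg : IsPathInvolution_s11 n g) (hh : IsPathInvolution_s11 k h) (hi : i < n) (hj : j < k) :
    gridWHomCountAt m n k (g i) (h j) = gridWHomCountAt m n k i j := by
  have hinv {f : Fin m → ℕ × ℕ} (hf : IsGridWHom m n k f) :
      Prod.map g h ∘ Prod.map g h ∘ f = f :=
    funext fun x => Prod.ext (hg.apply_apply _ (hf.1 x).1) (hh.apply_apply _ (hf.1 x).2)
  refine Nat.card_congr
    { toFun := fun f => ⟨Prod.map g h ∘ f.1, f.2.1.prodMap hg hh, fun h₀ => ?_⟩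
      invFun := fun f => ⟨Prod.map g h ∘ f.1, f.2.1.prodMap hg hh, fun h₀ => ?_⟩
      left_inv := fun f => Subtype.ext (hinv f.2.1)
      right_inv := fun f => Subtype.ext (hinv f.2.1) }
  · simp [f.2.2 h₀, hg.apply_apply i hi, hh.apply_apply j hj]
  · simp [f.2.2 h₀]

theorem gridWHomCount_formula_general (m n k : ℕ) (hm : 2 < m) :
    (gridWHomCount m n k : ℚ) =
      4 * ∑ i ∈ Finset.range (n / 2), ∑ j ∈ Finset.range (k / 2),
            (gridWHomCountAt m n k i j : ℚ) +
      (1 - (-1 : ℚ) ^ n) * ∑ j ∈ Finset.range (k / 2), (gridWHomCountAt m n k (n / 2) j : ℚ) +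
      (1 - (-1 : ℚ) ^ k) * ∑ i ∈ Finset.range (n / 2), (gridWHomCountAt m n k i (k / 2) : ℚ) +
      (1 / 4) * (1 - (-1 : ℚ) ^ n) * (1 - (-1 : ℚ) ^ k) *
        (gridWHomCountAt m n k (n / 2) (k / 2) : ℚ) := by
  have hcount := (gridWHomCount_eq_sum_gridWHomCountAt (by omega : 0 < m) n k).trans <|
    sum_range_sum_range_eq_of_reflect
      (fun i hi j hj => gridWHomCountAt_prodMap_s11 (isPathInvolution_reflect_s11 n)
        (isPathInvolution_id k) hi hj)
      (fun i hi j hj => gridWHomCountAt_prodMap_s11 (isPathInvolution_id n)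
        (isPathInvolution_reflect_s11 k) hi hj)
  rw [hcount, one_sub_neg_one_pow, one_sub_neg_one_pow]
  push_cast [smul_eq_mul]
  ring

/-- the full counting formula for `|WHom(P_m, P_n □ P_k)|` in terms of the
counts `|WHom^{ij}(P_m, P_n □ P_k)|`, for arbitrary parities of `n` and `k`. -/
theorem gridWHomCount_formula (m n k : ℕ) (hm : 2 < m) (hn : 0 < n) (hk : 0 < k) :
    (gridWHomCount m n k : ℚ) =
      4 * ∑ i ∈ Finset.range (n / 2), ∑ j ∈ Finset.range (k / 2),
            (gridWHomCountAt m n k i j : ℚ) +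
      (1 - (-1 : ℚ) ^ n) * ∑ j ∈ Finset.range (k / 2), (gridWHomCountAt m n k (n / 2) j : ℚ) +
      (1 - (-1 : ℚ) ^ k) * ∑ i ∈ Finset.range (n / 2), (gridWHomCountAt m n k i (k / 2) : ℚ) +
      (1 / 4) * (1 - (-1 : ℚ) ^ n) * (1 - (-1 : ℚ) ^ k) *
        (gridWHomCountAt m n k (n / 2) (k / 2) : ℚ) :=
  gridWHomCount_formula_general m n k hm
end

section
/- Case 1 of the main counting theorem: let m, n be positive integers and j a non-negative integer with m ≤ n and j < n. The number of weak homomorphisms f from P_m to P_n with f(0) = j such that the number of steps x with f(x+1) = f(x) − 1 strictly exceeds j equals Σ_{t=j+1}^{j+⌊(m−j−1)/2⌋} Σ_{s=t−j}^{m−1−t} [ binom(m−1; s, t, m−1−s−t) − binom(m−1; t−j−1, s+j+1, m−1−s−t) ], where sums whose upper limit is below their lower limit are 0. -/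
/-- The multinomial coefficient `binom(n; a, b, c)`, with integer arguments: it equals
`n! / (a! b! c!)` when `a, b, c` are non-negative and `a + b + c = n`, and is `0`
otherwise. -/
def multi3 (n a b c : ℤ) : ℕ :=
  if 0 ≤ a ∧ 0 ≤ b ∧ 0 ≤ c ∧ a + b + c = n then
    Nat.factorial n.toNat / (Nat.factorial a.toNat * Nat.factorial b.toNat * Nat.factorial c.toNat)
  else 0

/-- The number of steps `x` with `f(x+1) = f(x) − 1`. -/
noncomputable def downSteps (m : ℕ) (f : Fin m → ℕ) : ℕ :=
  Nat.card {x : ℕ // ∃ h : x + 1 < m, f ⟨x, Nat.lt_of_succ_lt h⟩ = f ⟨x + 1, h⟩ + 1}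

/-!
A weak homomorphism `f : P_m → P_n` with `f 0 = j` is determined by its word of `m - 1` steps
in `{-1, 0, 1}` (a `SignType` word), and a word comes from such an `f` exactly when its partial
sums never drop below `-j`; when `m ≤ n` and more than `j` steps go down, the bound `f < n` holds
automatically. There are `binom(m-1; s, t, m-1-s-t)` words with `s` up-steps and `t` down-steps.
By André's reflection principle (negate every step after the first visit to `-(j+1)`), those of
them that do visit `-(j+1)` correspond bijectively to the words with `t-j-1` up-steps and `s+j+1`
down-steps. Summing over the feasible `(s, t)` gives the formula.
-/

open Finset

lemma exists_eq_of_le_of_sub_one_le {g : ℕ → ℤ} (hg : ∀ k, g k - 1 ≤ g (k + 1)) {a : ℤ} {M : ℕ}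
    (h0 : a ≤ g 0) (hM : g M ≤ a) : ∃ k ≤ M, g k = a := by
  induction M with
  | zero => exact ⟨0, le_rfl, le_antisymm hM h0⟩
  | succ M ih =>
    by_cases h : g M ≤ a
    · obtain ⟨k, hk, hka⟩ := ih h
      exact ⟨k, hk.trans M.le_succ, hka⟩
    · exact ⟨M + 1, le_rfl, le_antisymm hM (by have := hg M; omega)⟩

lemma isPathWHom_iff {N n : ℕ} {f : Fin (N + 1) → ℕ} :
    IsPathWHom (N + 1) n f ↔ (∀ k, f k < n) ∧ ∀ i : Fin N,
      f i.succ = f i.castSucc ∨ f i.succ = f i.castSucc + 1 ∨ f i.castSucc = f i.succ + 1 :=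
  and_congr_right' ⟨fun h i => h i i.succ.is_lt, fun h x hx => h ⟨x, by omega⟩⟩

lemma IsPathWHom.step {N n : ℕ} {f : Fin (N + 1) → ℕ} (hf : IsPathWHom (N + 1) n f) (i : Fin N) :
    f i.succ = f i.castSucc ∨ f i.succ = f i.castSucc + 1 ∨ f i.castSucc = f i.succ + 1 :=
  (isPathWHom_iff.1 hf).2 i

lemma downSteps_eq_card {N : ℕ} (f : Fin (N + 1) → ℕ) :
    downSteps (N + 1) f = #{i : Fin N | f i.castSucc = f i.succ + 1} := by
  let e : {x : ℕ // ∃ h : x + 1 < N + 1, f ⟨x, Nat.lt_of_succ_lt h⟩ = f ⟨x + 1, h⟩ + 1} ≃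
      {i : Fin N // f i.castSucc = f i.succ + 1} :=
    { toFun := fun x => ⟨⟨x.1, by obtain ⟨h, -⟩ := x.2; omega⟩, x.2.2⟩
      invFun := fun i => ⟨i.1, i.1.succ.is_lt, i.2⟩
      left_inv := fun _ => rfl
      right_inv := fun _ => rfl }
  rw [downSteps, Nat.card_congr e, Nat.card_eq_fintype_card, Fintype.card_subtype]

namespace StepWord

variable {N : ℕ}

def height (w : Fin N → SignType) (k : ℕ) : ℤ := ∑ i : Fin N with i.val < k, (w i : ℤ)

def ups (w : Fin N → SignType) : ℕ := #{i | w i = 1}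

def downs (w : Fin N → SignType) : ℕ := #{i | w i = -1}

@[simp]
lemma height_zero (w : Fin N → SignType) : height w 0 = 0 := by
  simp [height]

lemma height_succ (w : Fin N → SignType) {k : ℕ} (hk : k < N) :
    height w (k + 1) = height w k + w ⟨k, hk⟩ := by
  have : (univ.filter fun i : Fin N => i.val < k + 1) =
      insert ⟨k, hk⟩ (univ.filter fun i : Fin N => i.val < k) := by
    ext i
    simp only [mem_filter, mem_univ, true_and, mem_insert, Fin.ext_iff]
    omega
  rw [height, this, sum_insert (by simp), height, add_comm]

lemma height_of_le (w : Fin N → SignType) {k : ℕ} (hk : N ≤ k) : height w k = height w N := by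
  simp only [height]
  congr 1
  ext i
  simp only [mem_filter, mem_univ, true_and, i.is_lt, iff_true]
  omega

lemma height_sub_one_le (w : Fin N → SignType) (k : ℕ) : height w k - 1 ≤ height w (k + 1) := by
  rcases lt_or_ge k N with hk | hk
  · have : (-1 : ℤ) ≤ w ⟨k, hk⟩ := by cases w ⟨k, hk⟩ <;> decide
    rw [height_succ w hk]
    omega
  · rw [height_of_le w hk, height_of_le w (k := k + 1) (by omega)]
    omega

lemma height_top (w : Fin N → SignType) : height w N = ups w - downs w := by
  have hcoe : ∀ x : SignType, (x : ℤ) = (if x = 1 then 1 else 0) - (if x = -1 then 1 else 0) := by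
    decide
  simp only [height, Fin.is_lt, filter_true, hcoe, sum_sub_distrib, sum_boole, ups, downs]

lemma height_le_ups (w : Fin N → SignType) (k : ℕ) : height w k ≤ ups w := by
  calc height w k ≤ ∑ i : Fin N with i.val < k, if w i = 1 then (1 : ℤ) else 0 :=
        sum_le_sum fun i _ => by cases w i <;> decide
    _ ≤ ∑ i, if w i = 1 then (1 : ℤ) else 0 :=
        sum_le_sum_of_subset_of_nonneg (filter_subset _ _) fun i _ _ => by positivity
    _ = ups w := by simp [ups]

lemma ups_add_downs (w : Fin N → SignType) : ups w + downs w = #{i | w i ≠ 0} := by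
  rw [ups, downs, ← card_union_of_disjoint (disjoint_filter.2 fun i _ h => by simp [h])]
  congr 1
  ext i
  simp only [mem_union, mem_filter, mem_univ, true_and]
  cases w i <;> decide

lemma ups_add_downs_le (w : Fin N → SignType) : ups w + downs w ≤ N := by
  rw [ups_add_downs]
  exact (card_filter_le _ _).trans (by simp)

def Hits (j : ℕ) (w : Fin N → SignType) : Prop := ∃ k ≤ N, height w k = -j - 1

instance (j : ℕ) : DecidablePred (Hits (N := N) j) := fun _ => by
  unfold Hits
  infer_instance

lemma hits_iff {j : ℕ} {w : Fin N → SignType} : Hits j w ↔ ∃ k, height w k ≤ -j - 1 := by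
  refine ⟨fun ⟨k, _, hk⟩ => ⟨k, hk.le⟩, fun ⟨k, hk⟩ => ?_⟩
  have hmin : height w (min k N) = height w k := by
    rcases le_total k N with h | h
    · rw [min_eq_left h]
    · rw [min_eq_right h, height_of_le w h]
  obtain ⟨l, hl, hwl⟩ := exists_eq_of_le_of_sub_one_le (height_sub_one_le w) (by simp) (hmin ▸ hk)
  exact ⟨l, hl.trans (min_le_right k N), hwl⟩

lemma not_hits_iff {j : ℕ} {w : Fin N → SignType} : ¬Hits j w ↔ ∀ k, -(j : ℤ) ≤ height w k := by
  simp only [hits_iff, not_exists, not_le]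
  exact forall_congr' fun k => by omega

def reflectFrom (k : ℕ) (w : Fin N → SignType) : Fin N → SignType :=
  fun i => if i.val < k then w i else -w i

lemma reflectFrom_reflectFrom (k : ℕ) (w : Fin N → SignType) :
    reflectFrom k (reflectFrom k w) = w := by
  funext i
  by_cases h : i.val < k <;> simp [reflectFrom, h]

lemma height_reflectFrom_of_le (w : Fin N → SignType) {k l : ℕ} (hl : l ≤ k) :
    height (reflectFrom k w) l = height w l :=
  sum_congr rfl fun i hi => by
    rw [reflectFrom, if_pos (by simp at hi; omega)]

lemma height_reflectFrom_top (w : Fin N → SignType) (k : ℕ) :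
    height (reflectFrom k w) N = 2 * height w k - height w N := by
  have hsplit : ∀ v : Fin N → SignType,
      height v N = height v k + ∑ i : Fin N with ¬i.val < k, (v i : ℤ) := fun v => by
    rw [height, height, filter_true_of_mem fun i _ => i.is_lt, sum_filter_add_sum_filter_not]
  have hfront := height_reflectFrom_of_le w (le_refl k)
  have hback : ∑ i : Fin N with ¬i.val < k, (reflectFrom k w i : ℤ) =
      -∑ i : Fin N with ¬i.val < k, (w i : ℤ) := by
    rw [← sum_neg_distrib]
    refine sum_congr rfl fun i hi => ?_
    rw [mem_filter] at hi
    rw [reflectFrom, if_neg hi.2, SignType.coe_neg]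
  rw [hsplit, hsplit w, hfront, hback]
  ring

lemma ups_add_downs_reflectFrom (w : Fin N → SignType) (k : ℕ) :
    ups (reflectFrom k w) + downs (reflectFrom k w) = ups w + downs w := by
  simp only [ups_add_downs]
  congr 1
  ext i
  simp only [mem_filter, mem_univ, true_and]
  unfold reflectFrom
  split_ifs <;> simp

lemma ups_reflectFrom {w : Fin N → SignType} {k : ℕ} {a : ℤ} (hk : height w k = a) :
    (ups (reflectFrom k w) : ℤ) = downs w + a := by
  have h1 := height_reflectFrom_top w k
  have h2 := ups_add_downs_reflectFrom w k
  rw [height_top, height_top, hk] at h1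
  omega

lemma downs_reflectFrom {w : Fin N → SignType} {k : ℕ} {a : ℤ} (hk : height w k = a) :
    (downs (reflectFrom k w) : ℤ) = ups w - a := by
  have h1 := height_reflectFrom_top w k
  have h2 := ups_add_downs_reflectFrom w k
  rw [height_top, height_top, hk] at h1
  omega

def reflect (j : ℕ) (w : Fin N → SignType) : Fin N → SignType :=
  if h : Hits j w then reflectFrom (Nat.find h) w else w

lemma reflect_eq_reflectFrom {j k : ℕ} {w : Fin N → SignType} (hk : k ≤ N)
    (hwk : height w k = -j - 1) (hmin : ∀ l < k, height w l ≠ -j - 1) :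
    reflect j w = reflectFrom k w := by
  have h : Hits j w := ⟨k, hk, hwk⟩
  rw [reflect, dif_pos h, (Nat.find_eq_iff h).2 ⟨⟨hk, hwk⟩, fun l hl ⟨_, hwl⟩ => hmin l hl hwl⟩]

lemma exists_reflect_eq {j : ℕ} {w : Fin N → SignType} (h : Hits j w) :
    ∃ k ≤ N, height w k = -j - 1 ∧ (∀ l < k, height w l ≠ -j - 1) ∧
      reflect j w = reflectFrom k w := by
  obtain ⟨hk, hwk⟩ := Nat.find_spec h
  have hmin : ∀ l < Nat.find h, height w l ≠ -j - 1 := fun l hl hwl =>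
    Nat.find_min h hl ⟨by omega, hwl⟩
  exact ⟨Nat.find h, hk, hwk, hmin, reflect_eq_reflectFrom hk hwk hmin⟩

lemma reflect_reflect {j : ℕ} {w : Fin N → SignType} (h : Hits j w) :
    reflect j (reflect j w) = w := by
  obtain ⟨k, hk, hwk, hmin, hw⟩ := exists_reflect_eq h
  rw [hw, reflect_eq_reflectFrom hk, reflectFrom_reflectFrom]
  · rwa [height_reflectFrom_of_le w le_rfl]
  · intro l hl
    rw [height_reflectFrom_of_le w hl.le]
    exact hmin l hl

lemma hits_reflect {j : ℕ} {w : Fin N → SignType} (h : Hits j w) : Hits j (reflect j w) := by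
  obtain ⟨k, hk, hwk, -, hw⟩ := exists_reflect_eq h
  exact ⟨k, hk, by rwa [hw, height_reflectFrom_of_le w le_rfl]⟩

lemma ups_reflect {j : ℕ} {w : Fin N → SignType} (h : Hits j w) :
    (ups (reflect j w) : ℤ) = downs w - j - 1 := by
  obtain ⟨k, -, hwk, -, hw⟩ := exists_reflect_eq h
  rw [hw, ups_reflectFrom hwk]
  ring

lemma downs_reflect {j : ℕ} {w : Fin N → SignType} (h : Hits j w) :
    (downs (reflect j w) : ℤ) = ups w + j + 1 := by
  obtain ⟨k, -, hwk, -, hw⟩ := exists_reflect_eq h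
  rw [hw, downs_reflectFrom hwk]
  ring

def ofSupports (U D : Finset (Fin N)) : Fin N → SignType :=
  fun i => if i ∈ U then 1 else if i ∈ D then -1 else 0

lemma filter_ofSupports_eq_one {U D : Finset (Fin N)} :
    univ.filter (ofSupports U D · = 1) = U := by
  ext i
  rw [mem_filter, ofSupports]
  by_cases hU : i ∈ U <;> by_cases hD : i ∈ D <;> simp [hU, hD]

lemma filter_ofSupports_eq_neg_one {U D : Finset (Fin N)} (hUD : D ⊆ Uᶜ) :
    univ.filter (ofSupports U D · = -1) = D := by
  ext i
  rw [mem_filter, ofSupports]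
  have := @hUD i
  by_cases hU : i ∈ U <;> by_cases hD : i ∈ D <;> simp_all

lemma card_ups_downs (s t : ℕ) :
    #{w : Fin N → SignType | ups w = s ∧ downs w = t} = N.choose s * (N - s).choose t := by
  have hbij : #{w : Fin N → SignType | ups w = s ∧ downs w = t} =
      #((powersetCard s univ).sigma fun U : Finset (Fin N) => powersetCard t Uᶜ) := by
    refine card_nbij' (fun w => ⟨univ.filter (w · = 1), univ.filter (w · = -1)⟩)
      (fun p => ofSupports p.1 p.2) ?_ ?_ ?_ ?_
    · intro w hw
      rw [mem_coe, mem_filter] at hw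
      simp only [mem_coe, mem_sigma, mem_powersetCard, subset_univ, true_and]
      refine ⟨hw.2.1, fun i hi => ?_, hw.2.2⟩
      simp only [mem_filter, mem_univ, true_and, mem_compl] at hi ⊢
      simp [hi]
    · rintro ⟨U, D⟩ hp
      simp only [mem_coe, mem_sigma, mem_powersetCard, subset_univ, true_and] at hp
      rw [mem_coe, mem_filter, ups, downs, filter_ofSupports_eq_one,
        filter_ofSupports_eq_neg_one hp.2.1]
      exact ⟨mem_univ _, hp.1, hp.2.2⟩
    · intro w _
      funext i
      simp only [ofSupports, mem_filter, mem_univ, true_and]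
      cases w i <;> decide
    · rintro ⟨U, D⟩ hp
      simp only [mem_coe, mem_sigma, mem_powersetCard, subset_univ, true_and] at hp
      simp only [filter_ofSupports_eq_one, filter_ofSupports_eq_neg_one hp.2.1]
  rw [hbij, card_sigma, sum_const_nat fun U hU => by
    rw [card_powersetCard, card_compl, Fintype.card_fin, (mem_powersetCard_univ.1 hU)],
    card_powersetCard, card_univ, Fintype.card_fin]

lemma multi3_natCast_eq_choose_mul_choose (s t c : ℕ) :
    multi3 (s + t + c : ℕ) s t c = (s + t + c).choose s * (t + c).choose t := by
  rw [multi3, if_pos ⟨by positivity, by positivity, by positivity, by push_cast; rfl⟩]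
  simp only [Int.toNat_natCast]
  refine Nat.div_eq_of_eq_mul_left (by positivity) ?_
  have h1 := Nat.choose_mul_factorial_mul_factorial (Nat.le_add_right s (t + c))
  have h2 := Nat.choose_mul_factorial_mul_factorial (Nat.le_add_right t c)
  rw [add_assoc, ← h1, Nat.add_sub_cancel_left, ← h2, Nat.add_sub_cancel_left]
  ring

lemma card_ups_downs_eq_multi3 (s t : ℤ) :
    #{w : Fin N → SignType | (ups w : ℤ) = s ∧ (downs w : ℤ) = t} = multi3 N s t (N - s - t) := by
  by_cases h : 0 ≤ s ∧ 0 ≤ t ∧ s + t ≤ N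
  · obtain ⟨s, rfl⟩ := Int.eq_ofNat_of_zero_le h.1
    obtain ⟨t, rfl⟩ := Int.eq_ofNat_of_zero_le h.2.1
    obtain ⟨c, rfl⟩ : ∃ c, N = s + t + c := ⟨N - s - t, by omega⟩
    simp only [Nat.cast_inj, card_ups_downs]
    rw [show ((s + t + c : ℕ) : ℤ) - s - t = c by push_cast; ring,
      multi3_natCast_eq_choose_mul_choose, show s + t + c - s = t + c by omega]
  · rw [multi3, if_neg (by omega), card_eq_zero, filter_eq_empty_iff]
    rintro w - ⟨hs, ht⟩
    have := ups_add_downs_le w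
    omega

lemma card_hits_ups_downs (j : ℕ) {s t : ℤ} (hts : t ≤ s + j + 1) :
    #{w : Fin N → SignType | Hits j w ∧ (ups w : ℤ) = s ∧ (downs w : ℤ) = t} =
      #{w : Fin N → SignType | (ups w : ℤ) = t - j - 1 ∧ (downs w : ℤ) = s + j + 1} := by
  have hits_of_mem : ∀ w : Fin N → SignType,
      (ups w : ℤ) = t - j - 1 → (downs w : ℤ) = s + j + 1 → Hits j w := fun w hu hd =>
    hits_iff.2 ⟨N, by rw [height_top]; omega⟩
  refine card_nbij' (reflect j) (reflect j) ?_ ?_ ?_ ?_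
  · intro w hw
    rw [mem_coe, mem_filter] at hw ⊢
    obtain ⟨-, h, hu, hd⟩ := hw
    exact ⟨mem_univ _, by rw [ups_reflect h]; omega, by rw [downs_reflect h]; omega⟩
  · intro w hw
    rw [mem_coe, mem_filter] at hw ⊢
    obtain ⟨-, hu, hd⟩ := hw
    have h := hits_of_mem w hu hd
    exact ⟨mem_univ _, hits_reflect h, by rw [ups_reflect h]; omega,
      by rw [downs_reflect h]; omega⟩
  · intro w hw
    rw [mem_coe, mem_filter] at hw
    exact reflect_reflect hw.2.1
  · intro w hw
    rw [mem_coe, mem_filter] at hw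
    exact reflect_reflect (hits_of_mem w hw.2.1 hw.2.2)

lemma card_not_hits_ups_downs (j : ℕ) {s t : ℤ} (hts : t ≤ s + j + 1) :
    (#{w : Fin N → SignType | ¬Hits j w ∧ (ups w : ℤ) = s ∧ (downs w : ℤ) = t} : ℤ) =
      multi3 N s t (N - s - t) - multi3 N (t - j - 1) (s + j + 1) (N - s - t) := by
  have hsplit := card_filter_add_card_filter_not (Hits j)
    (s := {w : Fin N → SignType | (ups w : ℤ) = s ∧ (downs w : ℤ) = t})
  have hhits := card_hits_ups_downs (N := N) j hts
  rw [card_ups_downs_eq_multi3, show (N : ℤ) - (t - j - 1) - (s + j + 1) = N - s - t by ring]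
    at hhits
  simp only [filter_filter, card_ups_downs_eq_multi3, and_comm (b := Hits j _),
    and_comm (b := ¬Hits j _), hhits] at hsplit
  omega

noncomputable def toWord (f : Fin (N + 1) → ℕ) : Fin N → SignType :=
  fun i => SignType.sign ((f i.succ : ℤ) - f i.castSucc)

def ofWord (j : ℕ) (w : Fin N → SignType) : Fin (N + 1) → ℕ :=
  fun k => (j + height w k).toNat

variable {n j : ℕ} {f : Fin (N + 1) → ℕ} {w : Fin N → SignType}

lemma coe_toWord (hf : IsPathWHom (N + 1) n f) (i : Fin N) :
    (toWord f i : ℤ) = f i.succ - f i.castSucc := by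
  rcases hf.step i with h | h | h <;> simp [toWord, h]

lemma coe_eq_add_height_toWord (hf : IsPathWHom (N + 1) n f) (k : Fin (N + 1)) :
    (f k : ℤ) = f 0 + height (toWord f) k := by
  induction k using Fin.induction with
  | zero => simp
  | succ i ih =>
    have hstep := coe_toWord hf i
    rw [Fin.val_castSucc] at ih
    rw [Fin.val_succ, height_succ _ i.is_lt, Fin.eta]
    omega

lemma downSteps_eq_downs (hf : IsPathWHom (N + 1) n f) :
    downSteps (N + 1) f = downs (toWord f) := by
  rw [downSteps_eq_card, downs]
  congr 1
  ext i
  rw [mem_filter, mem_filter]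
  rcases hf.step i with h | h | h <;> simp [toWord, h, add_assoc]

lemma le_height_toWord (hf : IsPathWHom (N + 1) n f) (h0 : f 0 = j) (k : ℕ) :
    -(j : ℤ) ≤ height (toWord f) k := by
  wlog hk : k ≤ N generalizing k
  · rw [height_of_le _ (by omega : N ≤ k)]
    exact this N le_rfl
  have : ((f ⟨k, by omega⟩ : ℕ) : ℤ) = j + height (toWord f) k := by
    simpa [h0] using coe_eq_add_height_toWord hf ⟨k, by omega⟩
  omega

lemma ofWord_toWord (hf : IsPathWHom (N + 1) n f) (h0 : f 0 = j) : ofWord j (toWord f) = f := by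
  funext k
  rw [ofWord, ← h0, ← coe_eq_add_height_toWord hf, Int.toNat_natCast]

lemma coe_ofWord (hw : ∀ k, -(j : ℤ) ≤ height w k) (k : Fin (N + 1)) :
    (ofWord j w k : ℤ) = j + height w k :=
  Int.toNat_of_nonneg (by linarith [hw k])

lemma coe_ofWord_succ (hw : ∀ k, -(j : ℤ) ≤ height w k) (i : Fin N) :
    (ofWord j w i.succ : ℤ) = ofWord j w i.castSucc + w i := by
  rw [coe_ofWord hw, coe_ofWord hw, Fin.val_succ, Fin.val_castSucc, height_succ w i.is_lt]
  ring

lemma toWord_ofWord (hw : ∀ k, -(j : ℤ) ≤ height w k) : toWord (ofWord j w) = w := by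
  funext i
  rw [toWord, coe_ofWord_succ hw]
  cases w i <;> simp

lemma isPathWHom_ofWord (hn : N + 1 ≤ n) (hw : ∀ k, -(j : ℤ) ≤ height w k) (hj : j < downs w) :
    IsPathWHom (N + 1) n (ofWord j w) := by
  refine isPathWHom_iff.2 ⟨fun k => ?_, fun i => ?_⟩
  · have := coe_ofWord hw k
    have := height_le_ups w k
    have := ups_add_downs_le w
    omega
  · have := coe_ofWord_succ hw i
    generalize w i = a at this
    cases a <;> simp at this <;> omega

lemma card_pathWHom_eq (hn : N + 1 ≤ n) :
    Nat.card {f : Fin (N + 1) → ℕ //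
        IsPathWHom (N + 1) n f ∧ (∀ h : 0 < N + 1, f ⟨0, h⟩ = j) ∧ j < downSteps (N + 1) f} =
      #{w : Fin N → SignType | ¬Hits j w ∧ j < downs w} := by
  let e : {f : Fin (N + 1) → ℕ //
        IsPathWHom (N + 1) n f ∧ (∀ h : 0 < N + 1, f ⟨0, h⟩ = j) ∧ j < downSteps (N + 1) f} ≃
      {w : Fin N → SignType // ¬Hits j w ∧ j < downs w} :=
    { toFun := fun ⟨f, hf, h0, hd⟩ => ⟨toWord f, not_hits_iff.2 (le_height_toWord hf (h0 _)),
        downSteps_eq_downs hf ▸ hd⟩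
      invFun := fun ⟨w, hw, hd⟩ => ⟨ofWord j w,
        isPathWHom_ofWord hn (not_hits_iff.1 hw) hd,
        fun _ => by simpa using coe_ofWord (not_hits_iff.1 hw) 0,
        by rwa [downSteps_eq_downs (isPathWHom_ofWord hn (not_hits_iff.1 hw) hd),
          toWord_ofWord (not_hits_iff.1 hw)]⟩
      left_inv := fun ⟨f, hf, h0, _⟩ => Subtype.ext (ofWord_toWord hf (h0 _))
      right_inv := fun ⟨w, hw, _⟩ => Subtype.ext (toWord_ofWord (not_hits_iff.1 hw)) }
  rw [Nat.card_congr e, Nat.card_eq_fintype_card, Fintype.card_subtype]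

lemma card_not_hits_eq_sum :
    (#{w : Fin N → SignType | ¬Hits j w ∧ j < downs w} : ℤ) =
      ∑ t ∈ Icc ((j : ℤ) + 1) (j + ((N : ℤ) - j) / 2), ∑ s ∈ Icc (t - j) (N - t),
        (#{w : Fin N → SignType | ¬Hits j w ∧ (ups w : ℤ) = s ∧ (downs w : ℤ) = t} : ℤ) := by
  have hbounds : ∀ w : Fin N → SignType, ¬Hits j w →
      (downs w : ℤ) - j ≤ ups w ∧ ups w + downs w ≤ N := fun w hw => by
    have := not_hits_iff.1 hw N
    rw [height_top] at this
    exact ⟨by omega, by exact_mod_cast ups_add_downs_le w⟩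
  rw [card_eq_sum_card_fiberwise (f := fun w => (downs w : ℤ))
    (t := Icc ((j : ℤ) + 1) (j + ((N : ℤ) - j) / 2)) fun w hw => by
    rw [mem_coe, mem_filter] at hw
    have := hbounds w hw.2.1
    rw [mem_coe, mem_Icc]
    dsimp only
    omega]
  push_cast
  refine sum_congr rfl fun t ht => ?_
  rw [mem_Icc] at ht
  rw [card_eq_sum_card_fiberwise (f := fun w => (ups w : ℤ)) (t := Icc (t - j) (N - t))
    fun w hw => by
    rw [mem_coe, mem_filter, mem_filter] at hw
    have := hbounds w hw.1.2.1
    rw [mem_coe, mem_Icc]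
    dsimp only
    omega]
  push_cast
  refine sum_congr rfl fun s _ => ?_
  congr 2
  ext w
  simp only [mem_filter, mem_univ, true_and]
  constructor
  · rintro ⟨⟨⟨hw, -⟩, ht⟩, hs⟩
    exact ⟨hw, hs, ht⟩
  · rintro ⟨hw, hs, ht⟩
    exact ⟨⟨⟨hw, by omega⟩, ht⟩, hs⟩

end StepWord

theorem whomCount_case1_general (m n j : ℕ) (hm : 0 < m) (hmn : m ≤ n) :
    (Nat.card {f : Fin m → ℕ //
        IsPathWHom m n f ∧ (∀ h : 0 < m, f ⟨0, h⟩ = j) ∧ j < downSteps m f} : ℤ) =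
      ∑ t ∈ Finset.Icc ((j : ℤ) + 1) ((j : ℤ) + ⌊((m : ℚ) - j - 1) / 2⌋),
        ∑ s ∈ Finset.Icc (t - (j : ℤ)) ((m : ℤ) - 1 - t),
          ((multi3 ((m : ℤ) - 1) s t ((m : ℤ) - 1 - s - t) : ℤ) -
            (multi3 ((m : ℤ) - 1) (t - (j : ℤ) - 1) (s + (j : ℤ) + 1)
              ((m : ℤ) - 1 - s - t) : ℤ)) := by
  obtain ⟨N, rfl⟩ : ∃ N, m = N + 1 := ⟨m - 1, by omega⟩
  have hfloor : ⌊(((N + 1 : ℕ) : ℚ) - j - 1) / 2⌋ = ((N : ℤ) - j) / 2 := by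
    rw [show ((N + 1 : ℕ) : ℚ) - j - 1 = (((N : ℤ) - j : ℤ) : ℚ) by push_cast; ring,
      show (2 : ℚ) = ((2 : ℕ) : ℚ) by norm_num, Rat.floor_intCast_div_natCast]
    norm_num
  rw [StepWord.card_pathWHom_eq hmn, hfloor, StepWord.card_not_hits_eq_sum, Nat.cast_add,
    Nat.cast_one, add_sub_cancel_right]
  refine sum_congr rfl fun t _ => sum_congr rfl fun s hs => ?_
  exact StepWord.card_not_hits_ups_downs j (by rw [mem_Icc] at hs; omega)

/-- Case 1: for `m ≤ n`, `j < n`, the number of weak homomorphisms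
`f : P_m → P_n` with `f(0) = j` whose number of down-steps strictly exceeds `j` equals
`Σ_{t=j+1}^{j+⌊(m−j−1)/2⌋} Σ_{s=t−j}^{m−1−t}
  [binom(m−1; s,t,m−1−s−t) − binom(m−1; t−j−1, s+j+1, m−1−s−t)]`. -/
theorem whomCount_case1 (m n j : ℕ) (hm : 0 < m) (hn : 0 < n)
    (hmn : m ≤ n) (hj : j < n) :
    (Nat.card {f : Fin m → ℕ //
        IsPathWHom m n f ∧ (∀ h : 0 < m, f ⟨0, h⟩ = j) ∧ j < downSteps m f} : ℤ) =
      ∑ t ∈ Finset.Icc ((j : ℤ) + 1) ((j : ℤ) + ⌊((m : ℚ) - j - 1) / 2⌋),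
        ∑ s ∈ Finset.Icc (t - (j : ℤ)) ((m : ℤ) - 1 - t),
          ((multi3 ((m : ℤ) - 1) s t ((m : ℤ) - 1 - s - t) : ℤ) -
            (multi3 ((m : ℤ) - 1) (t - (j : ℤ) - 1) (s + (j : ℤ) + 1)
              ((m : ℤ) - 1 - s - t) : ℤ)) :=
  whomCount_case1_general m n j hm hmn
end
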